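/- arXiv:1904.08687 — 2 statements merged into one kernel-verified Lean document; each statement's English description precedes it below -/
import Mathlib

section
/- Let (R, 𝔪, k) be a Cohen–Macaulay Noetherian local ring of Krull dimension d ≥ 2. Let x ∈ 𝔪 be a nonzerodivisor on R and let 𝔭 be a minimal prime ideal over the principal ideal (x). Then 𝔭 ≠ 𝔪, and the injective hull E = E(R/𝔭) satisfies: (i) Hom_R(k, E) = 0, and Ext^i_R(k, E) = 0 for all i ≥ 0, so E ∈ hCM(R); (ii) x annihilates a nonzero element of E (namely any e ∈ E with annihilator 𝔭), so x is a zerodivisor on E and no system of parameters of R whose first element is x is a weakly E-regular sequence. -/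
/-!
Common setup: `(R, 𝔪, k)` is a commutative Noetherian local ring of Krull dimension `d`.
We express vanishing of `Ext^i_R(M, N)` and `Tor_i^R(M, N)` via the categorical
`Ext`/`Tor` functors on `ModuleCat R`.
-/

open CategoryTheory Opposite IsLocalRing

universe u

/-- `ExtV R i M N` asserts that the Ext group `Ext^i_R(M, N)` vanishes. -/
noncomputable def ExtV (R : Type u) [CommRing R] (i : ℕ) (M N : Type u)
    [AddCommGroup M] [Module R M] [AddCommGroup N] [Module R N] : Prop :=
  Subsingleton (((Ext R (ModuleCat.{u} R) i).obj (op (ModuleCat.of R M))).obj (ModuleCat.of R N))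

/-- `TorV R i M N` asserts that `Tor_i^R(M, N)` vanishes. -/
noncomputable def TorV (R : Type u) [CommRing R] (i : ℕ) (M N : Type u)
    [AddCommGroup M] [Module R M] [AddCommGroup N] [Module R N] : Prop :=
  Subsingleton (((Tor (ModuleCat.{u} R) i).obj (ModuleCat.of R M)).obj (ModuleCat.of R N))

/-- A system of parameters for a `d`-dimensional local ring: a list of `d` elements of the
maximal ideal generating an `𝔪`-primary ideal. -/
def IsSOP (R : Type u) [CommRing R] [IsLocalRing R] (d : ℕ) (xs : List R) : Prop :=
  xs.length = d ∧ (∀ x ∈ xs, x ∈ maximalIdeal R) ∧ (Ideal.ofList xs).radical = maximalIdeal R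

/-- `Ω` is a canonical module for the `d`-dimensional local ring `R`: it is finitely
generated, `Ext^i_R(k, Ω) = 0` for `i ≠ d`, and `Ext^d_R(k, Ω)` is one-dimensional over `k`
(equivalently, isomorphic to `k` as an `R`-module). -/
noncomputable def IsCanonicalModule (R : Type u) [CommRing R] [IsLocalRing R] (d : ℕ)
    (Ω : Type u) [AddCommGroup Ω] [Module R Ω] : Prop :=
  Module.Finite R Ω ∧ (∀ i : ℕ, i ≠ d → ExtV R i (ResidueField R) Ω) ∧
    Nonempty ((((Ext R (ModuleCat.{u} R) d).obj (op (ModuleCat.of R (ResidueField R)))).obj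
        (ModuleCat.of R Ω)) ≃ₗ[R] ResidueField R)

open Limits

section Ext

variable {R : Type*} [Ring R] {C : Type*} [Category C] [Abelian C] [Linear R C]

namespace CategoryTheory.ProjectiveResolution

variable {X : C} (P : ProjectiveResolution X) (Y : C)

lemma linearYonedaObj_d_apply {a b : ℕ} (f : P.complex.X a ⟶ Y) :
    (P.complex.linearYonedaObj R Y).d a b f = P.complex.d b a ≫ f := by
  rw [ChainComplex.linearYonedaObj_d]
  rfl

lemma exactAt_zero_linearYonedaObj (h : ∀ f : X ⟶ Y, f = 0) :
    (P.complex.linearYonedaObj R Y).ExactAt 0 := by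
  rw [HomologicalComplex.exactAt_iff' _ 0 0 1 (by simp) (by simp),
    ShortComplex.moduleCat_exact_iff]
  intro f hf
  obtain ⟨g, hg⟩ := Cofork.IsColimit.desc' P.isColimitCokernelCofork f
    ((P.linearYonedaObj_d_apply Y f).symm.trans (hf.trans zero_comp.symm))
  refine ⟨0, ?_⟩
  rw [map_zero, ← hg, h g]
  exact comp_zero.symm

lemma exactAt_succ_linearYonedaObj [Injective Y] (n : ℕ) :
    (P.complex.linearYonedaObj R Y).ExactAt (n + 1) := by
  rw [HomologicalComplex.exactAt_iff' _ n (n + 1) (n + 2) (by simp) (by simp),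
    ShortComplex.moduleCat_exact_iff]
  intro f hf
  have hf' : P.complex.d (n + 2) (n + 1) ≫ f = 0 := (P.linearYonedaObj_d_apply Y f).symm.trans hf
  exact ⟨(P.exact_succ n).descToInjective f hf',
    (P.linearYonedaObj_d_apply Y _).trans ((P.exact_succ n).comp_descToInjective f hf')⟩

end CategoryTheory.ProjectiveResolution

lemma isZero_Ext_of_injective_of_forall_eq_zero [EnoughProjectives C] {X Y : C} [Injective Y]
    (h : ∀ f : X ⟶ Y, f = 0) (n : ℕ) : IsZero (((Ext R C n).obj (op X)).obj Y) := by
  let P := ProjectiveResolution.of X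
  refine IsZero.of_iso ?_ (P.isoExt n Y)
  rw [← HomologicalComplex.exactAt_iff_isZero_homology]
  cases n with
  | zero => exact P.exactAt_zero_linearYonedaObj Y h
  | succ n => exact P.exactAt_succ_linearYonedaObj Y n

end Ext

section EssentialExtension

variable {R : Type*} [CommRing R] {𝔭 : Ideal R} [𝔭.IsPrime] {E : Type*} [AddCommGroup E]
  [Module R E] {ι : (R ⧸ 𝔭) →ₗ[R] E}

lemma exists_ne_zero_smul_eq_zero_of_mem (hι : Function.Injective ι) {x : R} (hx : x ∈ 𝔭) :
    ∃ e : E, e ≠ 0 ∧ x • e = 0 := by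
  refine ⟨ι 1, (map_ne_zero_iff ι hι).mpr one_ne_zero, ?_⟩
  rw [← map_smul, Algebra.smul_def, mul_one, Ideal.Quotient.algebraMap_eq,
    Ideal.Quotient.eq_zero_iff_mem.mpr hx, map_zero]

variable (hι : Function.Injective ι)
  (hess : ∀ N : Submodule R E, N ≠ ⊥ → N ⊓ LinearMap.range ι ≠ ⊥)
include hι hess

/-- Some nonzero multiple of `e` lies in `R ⧸ 𝔭`, where every nonzero element has
annihilator `𝔭`. -/
lemma annihilator_span_singleton_le_of_essential {e : E} (he : e ≠ 0) :
    (R ∙ e).annihilator ≤ 𝔭 := by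
  obtain ⟨v, hv, hv0⟩ := Submodule.exists_mem_ne_zero_of_ne_bot
    (hess _ (by rwa [Ne, Submodule.span_singleton_eq_bot]))
  obtain ⟨hvN, u, hu⟩ := Submodule.mem_inf.mp hv
  obtain ⟨r, rfl⟩ := Submodule.mem_span_singleton.mp hvN
  obtain ⟨s, rfl⟩ := Ideal.Quotient.mk_surjective u
  have hs : s ∉ 𝔭 := fun hs ↦ hv0 (by rw [← hu, Ideal.Quotient.eq_zero_iff_mem.mpr hs, map_zero])
  intro a ha
  rw [Submodule.mem_annihilator_span_singleton] at ha
  have has : Ideal.Quotient.mk 𝔭 (a * s) = 0 := hι <| by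
    change ι (a • Ideal.Quotient.mk 𝔭 s) = ι 0
    rw [map_zero, map_smul, hu, smul_comm, ha, smul_zero]
  exact ((‹𝔭.IsPrime›).mem_or_mem (Ideal.Quotient.eq_zero_iff_mem.mp has)).resolve_right hs

lemma subsingleton_residueField_linearMap_of_essential [IsLocalRing R]
    (h𝔭 : 𝔭 ≠ maximalIdeal R) : Subsingleton (ResidueField R →ₗ[R] E) := by
  suffices h : ∀ φ : ResidueField R →ₗ[R] E, φ 1 = 0 by
    refine ⟨fun φ ψ ↦ LinearMap.ext fun z ↦ ?_⟩
    obtain ⟨r, rfl⟩ := residue_surjective z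
    rw [← ResidueField.algebraMap_eq, Algebra.algebraMap_eq_smul_one, map_smul, map_smul, h, h]
  intro φ
  by_contra hφ
  have hm : maximalIdeal R ≤ (R ∙ φ 1).annihilator := fun a ha ↦ by
    rw [Submodule.mem_annihilator_span_singleton, ← map_smul, ← Algebra.algebraMap_eq_smul_one,
      ResidueField.algebraMap_eq, (residue_eq_zero_iff a).mpr ha, map_zero]
  exact h𝔭 ((hm.trans (annihilator_span_singleton_le_of_essential hι hess hφ)).antisymm'
    (le_maximalIdeal (Ideal.IsPrime.ne_top')))

end EssentialExtension

lemma Ideal.ne_maximalIdeal_of_mem_minimalPrimes_span_singleton {R : Type*} [CommRing R]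
    [IsLocalRing R] [IsNoetherianRing R] (hdim : 1 < ringKrullDim R) {x : R} {𝔭 : Ideal R}
    (h𝔭 : 𝔭 ∈ (Ideal.span {x}).minimalPrimes) : 𝔭 ≠ maximalIdeal R := by
  rintro rfl
  have hle := Ideal.height_le_one_of_isPrincipal_of_mem_minimalPrimes _ _ h𝔭
  rw [← maximalIdeal_height_eq_ringKrullDim] at hdim
  exact hdim.not_ge (by exact_mod_cast hle)

lemma RingTheory.Sequence.not_isWeaklyRegular_cons_of_smul_eq_zero {R M : Type*} [CommRing R]
    [AddCommGroup M] [Module R M] {r : R} (rs : List R) {e : M} (he : e ≠ 0) (hre : r • e = 0) :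
    ¬ IsWeaklyRegular M (r :: rs) := fun h ↦
  he (((isWeaklyRegular_cons_iff M r rs).mp h).1.right_eq_zero_of_smul hre)

theorem stmt1_general (R : Type u) [CommRing R] [IsLocalRing R] [IsNoetherianRing R]
    (d : ℕ) (hd : 2 ≤ d) (hdim : ringKrullDim R = d)
    (x : R)
    (𝔭 : Ideal R) (h𝔭 : 𝔭 ∈ (Ideal.span {x}).minimalPrimes)
    (E : Type u) [AddCommGroup E] [Module R E] (hE : Module.Injective R E)
    (ι : (R ⧸ 𝔭) →ₗ[R] E) (hι : Function.Injective ι)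
    (hess : ∀ N : Submodule R E, N ≠ ⊥ → N ⊓ LinearMap.range ι ≠ ⊥) :
    𝔭 ≠ maximalIdeal R ∧
    Subsingleton (ResidueField R →ₗ[R] E) ∧
    (∀ i : ℕ, ExtV R i (ResidueField R) E) ∧
    (∃ e : E, e ≠ 0 ∧ x • e = 0) ∧
    (∀ xs : List R, xs.head? = some x → IsSOP R d xs →
      ¬ RingTheory.Sequence.IsWeaklyRegular E xs) := by
  have : 𝔭.IsPrime := h𝔭.isPrime
  have h𝔭m : 𝔭 ≠ maximalIdeal R :=
    Ideal.ne_maximalIdeal_of_mem_minimalPrimes_span_singleton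
      (by rw [hdim]; exact_mod_cast hd) h𝔭
  have hHom := subsingleton_residueField_linearMap_of_essential hι hess h𝔭m
  obtain ⟨e, he, hxe⟩ :=
    exists_ne_zero_smul_eq_zero_of_mem hι (h𝔭.1.2 (Ideal.mem_span_singleton_self x))
  refine ⟨h𝔭m, hHom, fun i ↦ ?_, ⟨e, he, hxe⟩, ?_⟩
  · have : Injective (ModuleCat.of R E) := (Module.injective_iff_injective_object R E).mp hE
    exact ModuleCat.subsingleton_of_isZero <| isZero_Ext_of_injective_of_forall_eq_zero
      (fun f ↦ ModuleCat.hom_ext (Subsingleton.elim _ _)) i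
  · rintro (_ | ⟨_, xs⟩) ⟨⟩ -
    exact RingTheory.Sequence.not_isWeaklyRegular_cons_of_smul_eq_zero xs he hxe

/-- over a Cohen–Macaulay Noetherian local ring of dimension `d ≥ 2`, if `x ∈ 𝔪`
is a nonzerodivisor and `𝔭` is a minimal prime over `(x)`, then `𝔭 ≠ 𝔪`, the injective hull
`E = E(R/𝔭)` lies in `hCM(R)` (indeed `Ext^i_R(k, E) = 0` for all `i`), `x` kills a nonzero
element of `E`, and no system of parameters starting with `x` is weakly `E`-regular. -/
theorem stmt1 (R : Type u) [CommRing R] [IsLocalRing R] [IsNoetherianRing R]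
    (d : ℕ) (hd : 2 ≤ d) (hdim : ringKrullDim R = d)
    (hCMring : ∀ i < d, ExtV R i (ResidueField R) R)
    (x : R) (hx : x ∈ maximalIdeal R) (hxreg : x ∈ nonZeroDivisors R)
    (𝔭 : Ideal R) (h𝔭 : 𝔭 ∈ (Ideal.span {x}).minimalPrimes)
    (E : Type u) [AddCommGroup E] [Module R E] (hE : Module.Injective R E)
    (ι : (R ⧸ 𝔭) →ₗ[R] E) (hι : Function.Injective ι)
    (hess : ∀ N : Submodule R E, N ≠ ⊥ → N ⊓ LinearMap.range ι ≠ ⊥) :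
    𝔭 ≠ maximalIdeal R ∧
    Subsingleton (ResidueField R →ₗ[R] E) ∧
    (∀ i : ℕ, ExtV R i (ResidueField R) E) ∧
    (∃ e : E, e ≠ 0 ∧ x • e = 0) ∧
    (∀ xs : List R, xs.head? = some x → IsSOP R d xs →
      ¬ RingTheory.Sequence.IsWeaklyRegular E xs) :=
  stmt1_general R d hd hdim x 𝔭 h𝔭 E hE ι hι hess
end

section
/- Let (R, 𝔪, k) be a Cohen–Macaulay Noetherian local ring of Krull dimension d and let M be an R-module admitting an exact sequence 0 → C_n → C_{n−1} → ⋯ → C_1 → C_0 → M → 0 in which every C_j satisfies Ext^i_R(k, C_j) = 0 for all i < d (a left hCM(R)-resolution of length n). Then Ext^i_R(k, M) = 0 for all i < d − n; that is, E-dp(M) + n ≥ d. -/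
/-!
Common setup: `(R, 𝔪, k)` is a commutative Noetherian local ring of Krull dimension `d`.
We express vanishing of `Ext^i_R(M, N)` and `Tor_i^R(M, N)` via the categorical
`Ext`/`Tor` functors on `ModuleCat R`.
-/

open CategoryTheory Opposite IsLocalRing

universe u

/-!
Split off `0 → K → C₀ → M → 0`, where `K = ker ε` has the shorter resolution `C_{n} → ⋯ → C₁`.
Computing `Ext(k, -)` from a projective resolution of `k` turns this short exact sequence into a
long exact sequence, whose piece `Ext^i(k, C₀) → Ext^i(k, M) → Ext^{i+1}(k, K)` gives the
bound by induction on `n`.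
-/

open Limits

section
variable {R : Type*} [Ring R] {C : Type*} [Category* C] [Abelian C] [Linear R C]

lemma CategoryTheory.ShortComplex.ShortExact.map_linearCoyoneda_obj {S : ShortComplex C}
    (hS : S.ShortExact) (P : C) [Projective P] :
    (S.map ((linearCoyoneda R C).obj (Opposite.op P))).ShortExact where
  exact := by
    have := hS.mono_f
    rw [ShortComplex.moduleCat_exact_iff]
    intro (h : P ⟶ S.X₂) hh
    exact ⟨hS.exact.lift h hh, hS.exact.lift_f h hh⟩
  mono_f := by
    have := hS.mono_f
    rw [ModuleCat.mono_iff_injective]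
    intro (h₁ : P ⟶ S.X₁) (h₂ : P ⟶ S.X₁) (he : h₁ ≫ S.f = h₂ ≫ S.f)
    exact cancel_mono S.f |>.mp he
  epi_g := by
    have := hS.epi_g
    rw [ModuleCat.epi_iff_surjective]
    intro (h : P ⟶ S.X₃)
    exact ⟨Projective.factorThru h S.g, Projective.factorThru_comp h S.g⟩

def ChainComplex.linearYonedaObjMap (K : ChainComplex C ℕ) {Y Z : C} (φ : Y ⟶ Z) :
    K.linearYonedaObj R Y ⟶ K.linearYonedaObj R Z where
  f i := ModuleCat.ofHom (Linear.rightComp R (K.X i) φ)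
  comm' i j _ := by
    ext h
    exact (Category.assoc _ _ _).symm

def ChainComplex.linearYonedaObjShortComplex (K : ChainComplex C ℕ) (S : ShortComplex C) :
    ShortComplex (CochainComplex (ModuleCat R) ℕ) :=
  ShortComplex.mk (K.linearYonedaObjMap S.f) (K.linearYonedaObjMap S.g) (by
    ext i h
    exact (Category.assoc _ _ _).trans (by rw [S.zero]; exact comp_zero))

lemma CategoryTheory.ShortComplex.ShortExact.linearYonedaObj {K : ChainComplex C ℕ}
    [∀ i, Projective (K.X i)] {S : ShortComplex C} (hS : S.ShortExact) :
    (K.linearYonedaObjShortComplex (R := R) S).ShortExact := by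
  rw [HomologicalComplex.shortExact_iff_degreewise_shortExact]
  exact fun j ↦ hS.map_linearCoyoneda_obj (K.X j)

lemma isZero_ext_of_isZero [EnoughProjectives C] (X : C) {Y : C} (hY : IsZero Y) (i : ℕ) :
    IsZero (((Ext R C i).obj (op X)).obj Y) := by
  let P := ProjectiveResolution.of X
  refine IsZero.of_iso ?_ (P.isoExt i Y)
  rw [← HomologicalComplex.exactAt_iff_isZero_homology, HomologicalComplex.exactAt_iff]
  have : Subsingleton (P.complex.X i ⟶ Y) := ⟨hY.eq_of_tgt⟩
  exact ShortComplex.exact_of_isZero_X₂ _ (@ModuleCat.isZero_of_subsingleton _ _ _ this)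

lemma isZero_ext_of_shortExact [EnoughProjectives C] {X : C} {S : ShortComplex C}
    (hS : S.ShortExact) {i : ℕ} (h₂ : IsZero (((Ext R C i).obj (op X)).obj S.X₂))
    (h₁ : IsZero (((Ext R C (i + 1)).obj (op X)).obj S.X₁)) :
    IsZero (((Ext R C i).obj (op X)).obj S.X₃) := by
  let P := ProjectiveResolution.of X
  refine ((hS.linearYonedaObj (R := R) (K := P.complex)).homology_exact₃ i (i + 1) rfl).isZero_X₂
    ?_ ?_ |>.of_iso (P.isoExt i S.X₃)
  · exact (h₂.of_iso (P.isoExt i S.X₂).symm).eq_of_src _ _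
  · exact (h₁.of_iso (P.isoExt (i + 1) S.X₁).symm).eq_of_tgt _ _

end

section
variable {R : Type u} [CommRing R] (X : Type u) [AddCommGroup X] [Module R X]

lemma extV_iff_isZero (i : ℕ) (M : Type u) [AddCommGroup M] [Module R M] :
    ExtV R i X M ↔
      IsZero (((Ext R (ModuleCat.{u} R) i).obj (op (ModuleCat.of R X))).obj (ModuleCat.of R M)) :=
  ModuleCat.isZero_iff_subsingleton.symm

lemma extV_of_subsingleton (i : ℕ) (M : Type u) [AddCommGroup M] [Module R M] [Subsingleton M] :
    ExtV R i X M :=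
  (extV_iff_isZero X i M).2 (isZero_ext_of_isZero _ (ModuleCat.isZero_of_subsingleton _) i)

lemma extV_of_surjective {i : ℕ} {N M : Type u} [AddCommGroup N] [Module R N] [AddCommGroup M]
    [Module R M] {ε : N →ₗ[R] M} (hε : Function.Surjective ε) (hN : ExtV R i X N)
    (hK : ExtV R (i + 1) X (LinearMap.ker ε)) : ExtV R i X M :=
  (extV_iff_isZero X i M).2 <| isZero_ext_of_shortExact (LinearMap.shortExact_shortComplexKer hε)
    ((extV_iff_isZero X i N).1 hN) ((extV_iff_isZero X (i + 1) _).1 hK)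

theorem extV_of_resolution (d n : ℕ) (M : Type u) [AddCommGroup M] [Module R M]
    (C : ℕ → Type u) [∀ j, AddCommGroup (C j)] [∀ j, Module R (C j)]
    (hC : ∀ j ≤ n, ∀ i < d, ExtV R i X (C j)) (hCzero : ∀ j, n < j → Subsingleton (C j))
    (g : ∀ j : ℕ, C (j + 1) →ₗ[R] C j) (ε : C 0 →ₗ[R] M) (hε : Function.Surjective ε)
    (hex0 : LinearMap.range (g 0) = LinearMap.ker ε)
    (hex : ∀ j : ℕ, LinearMap.range (g (j + 1)) = LinearMap.ker (g j)) :
    ∀ i < d - n, ExtV R i X M := by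
  induction n generalizing M C with
  | zero =>
    intro i hi
    refine extV_of_surjective X hε (hC 0 le_rfl i hi) ?_
    have := hCzero 1 one_pos
    have := (g 0).surjective_rangeRestrict.subsingleton
    rw [← hex0]
    exact extV_of_subsingleton X _ _
  | succ n ih =>
    intro i hi
    refine extV_of_surjective X hε (hC 0 (Nat.zero_le _) i (by omega)) ?_
    rw [← hex0]
    refine ih _ (fun j ↦ C (j + 1)) (fun j hj ↦ hC (j + 1) (by omega))
      (fun j hj ↦ hCzero (j + 1) (by omega)) (fun j ↦ g (j + 1)) (g 0).rangeRestrict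
      (g 0).surjective_rangeRestrict ?_ (fun j ↦ hex (j + 1)) (i + 1) (by omega)
    rw [LinearMap.ker_rangeRestrict, hex 0]

end

theorem stmt11_general (R : Type u) [CommRing R] [IsLocalRing R]
    (d : ℕ)
    (n : ℕ) (M : Type u) [AddCommGroup M] [Module R M]
    (C : ℕ → Type u) [∀ j, AddCommGroup (C j)] [∀ j, Module R (C j)]
    (hC : ∀ j ≤ n, ∀ i < d, ExtV R i (ResidueField R) (C j))
    (hCzero : ∀ j, n < j → Subsingleton (C j))
    (g : ∀ j : ℕ, C (j + 1) →ₗ[R] C j) (ε : C 0 →ₗ[R] M)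
    (hε : Function.Surjective ε)
    (hex0 : LinearMap.range (g 0) = LinearMap.ker ε)
    (hex : ∀ j : ℕ, LinearMap.range (g (j + 1)) = LinearMap.ker (g j)) :
    ∀ i : ℕ, i < d - n → ExtV R i (ResidueField R) M :=
  extV_of_resolution (ResidueField R) d n M C hC hCzero g ε hε hex0 hex

/-- over a Cohen–Macaulay Noetherian local ring of dimension `d`, if `M` has a
left `hCM(R)`-resolution `0 → C_n → ⋯ → C_0 → M → 0` (encoded by modules `C j` which are
trivial for `j > n`), then `Ext^i_R(k, M) = 0` for all `i < d − n`. -/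
theorem stmt11 (R : Type u) [CommRing R] [IsLocalRing R] [IsNoetherianRing R]
    (d : ℕ) (hdim : ringKrullDim R = d)
    (hCMring : ∀ i < d, ExtV R i (ResidueField R) R)
    (n : ℕ) (M : Type u) [AddCommGroup M] [Module R M]
    (C : ℕ → Type u) [∀ j, AddCommGroup (C j)] [∀ j, Module R (C j)]
    (hC : ∀ j ≤ n, ∀ i < d, ExtV R i (ResidueField R) (C j))
    (hCzero : ∀ j, n < j → Subsingleton (C j))
    (g : ∀ j : ℕ, C (j + 1) →ₗ[R] C j) (ε : C 0 →ₗ[R] M)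
    (hε : Function.Surjective ε)
    (hex0 : LinearMap.range (g 0) = LinearMap.ker ε)
    (hex : ∀ j : ℕ, LinearMap.range (g (j + 1)) = LinearMap.ker (g j)) :
    ∀ i : ℕ, i < d - n → ExtV R i (ResidueField R) M :=
  stmt11_general R d n M C hC hCzero g ε hε hex0 hex
end
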